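/- arXiv:2502.02022 — 2 statements merged into one kernel-verified Lean document; each statement's English description precedes it below -/
import Mathlib

section
/- Let T and T' be distinct spanning trees on n vertices. Then in any correct decision tree model where queries are monotone functions (such as ORs of subsets of variables), the computation paths of the characteristic vectors of T and T' must be distinct, assuming the model computes the non-tree indicator g. -/
/-- A decision tree over input variables indexed by `ι`: each internal node
queries a Boolean function of the whole input. -/
inductive DTree (ι : Type) : Type where
  | leaf : Bool → DTree ι
  | node : ((ι → Bool) → Bool) → DTree ι → DTree ι → DTree ι

namespace DTree
variable {ι : Type}

/-- Depth: number of edges on the longest root-to-leaf path. -/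
def depth : DTree ι → ℕ
  | leaf _ => 0
  | node _ t f => max t.depth f.depth + 1

/-- Evaluate the tree on an input. -/
def eval : DTree ι → (ι → Bool) → Bool
  | leaf b, _ => b
  | node q t f, x => if q x then t.eval x else f.eval x

/-- The computation path of an input: the list of query answers on the way down. -/
def path : DTree ι → (ι → Bool) → List Bool
  | leaf _, _ => []
  | node q t f, x => q x :: (if q x then t.path x else f.path x)

/-- Number of leaves. -/
def numLeaves : DTree ι → ℕ
  | leaf _ => 1
  | node _ t f => t.numLeaves + f.numLeaves

/-- All queries in the tree belong to the family `Q`. -/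
def OnlyQueries (Q : Set ((ι → Bool) → Bool)) : DTree ι → Prop
  | leaf _ => True
  | node q t f => q ∈ Q ∧ t.OnlyQueries Q ∧ f.OnlyQueries Q

end DTree

/-- OR-queries: OR of an arbitrary subset of the variables. -/
def orQueries (ι : Type) [DecidableEq ι] : Set ((ι → Bool) → Bool) :=
  {q | ∃ S : Finset ι, q = fun x => S.sup x}

/-- The threshold-2 function of a multiset of variables: `1` iff at least two
of the queried positions (with multiplicity) carry value `1`. -/
def T2 {ι : Type} (M : Multiset ι) (x : ι → Bool) : Bool :=
  decide (2 ≤ (M.map fun i => (x i).toNat).sum)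

/-- T₂-queries: threshold-2 applied to an arbitrary multiset of variables. -/
def t2Queries (ι : Type) : Set ((ι → Bool) → Bool) :=
  {q | ∃ M : Multiset ι, q = T2 M}

/-- Single-variable (standard) queries. -/
def bitQueries (ι : Type) : Set ((ι → Bool) → Bool) :=
  {q | ∃ i : ι, q = fun x => x i}

/-- Number of ones in an input. -/
def ones (n : ℕ) (x : Fin n → Bool) : ℕ := ∑ i, (x i).toNat

/-- The simple graph on `{1,…,n}` encoded by a Boolean vector of edge variables. -/
def graphOf (n : ℕ) (x : Sym2 (Fin n) → Bool) : SimpleGraph (Fin n) :=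
  SimpleGraph.fromEdgeSet {e | x e = true}

lemma key_or {ι : Type} [DecidableEq ι] (t : DTree ι)
    (hq : t.OnlyQueries (orQueries ι)) (x y : ι → Bool)
    (h : t.path x = t.path y) :
    t.eval (fun i => x i || y i) = t.eval x ∧
      t.path (fun i => x i || y i) = t.path x := by
  induction t with
  | leaf b => simp [DTree.path, DTree.eval]
  | node q tt ff iht ihf =>
    obtain ⟨⟨S, rfl⟩, hqt, hqf⟩ := hq
    simp only [DTree.path, List.cons.injEq] at h
    obtain ⟨h1, h2⟩ := h
    have hz : S.sup (fun i => x i || y i) = S.sup x := by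
      have : S.sup (fun i => x i || y i) = S.sup x ⊔ S.sup y := by
        rw [← Finset.sup_sup]; rfl
      rw [this, ← h1]; cases S.sup x <;> rfl
    simp only [DTree.eval, DTree.path, hz, ← h1] at h2 ⊢
    rcases Bool.eq_false_or_eq_true (S.sup x) with hsx | hsx <;>
      simp only [hsx, Bool.false_eq_true, if_false, if_true, List.cons.injEq, true_and] at h2 ⊢
    · exact ⟨(iht hqt h2).1, (iht hqt h2).2⟩
    · exact ⟨(ihf hqf h2).1, (ihf hqf h2).2⟩

/-- In any OR-query decision tree computing the non-tree indicator, the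
characteristic vectors of two distinct trees follow distinct computation paths. -/
theorem stmt4 {n : ℕ} (t : DTree (Sym2 (Fin n)))
    (hq : t.OnlyQueries (orQueries (Sym2 (Fin n))))
    (hcomp : ∀ z, t.eval z = true ↔ ¬ (graphOf n z).IsTree)
    (x y : Sym2 (Fin n) → Bool)
    (hx : (graphOf n x).IsTree) (hy : (graphOf n y).IsTree)
    (hne : graphOf n x ≠ graphOf n y) :
    t.path x ≠ t.path y := by
  classical
  intro hpath
  set z : Sym2 (Fin n) → Bool := fun i => x i || y i with hzdef
  obtain ⟨heval, -⟩ := key_or t hq x y hpath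
  obtain ⟨heval', -⟩ := key_or t hq y x hpath.symm
  have hevx : t.eval x = false := by
    rcases Bool.eq_false_or_eq_true (t.eval x) with h | h
    · exact absurd hx ((hcomp x).mp h)
    · exact h
  have hz' : (fun i => y i || x i) = z := by
    funext i; simp [hzdef, Bool.or_comm]
  rw [hz'] at heval'
  have hzt : (graphOf n z).IsTree := by
    by_contra hcon
    have : t.eval z = true := (hcomp z).mpr hcon
    rw [heval, hevx] at this; exact Bool.false_ne_true this
  -- monotonicity
  have hle : ∀ w : Sym2 (Fin n) → Bool, (∀ i, w i = true → z i = true) →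
      graphOf n w ≤ graphOf n z := by
    intro w hw
    exact SimpleGraph.fromEdgeSet_mono (fun e he => hw e he)
  have hxz : graphOf n x ≤ graphOf n z := hle x (by intro i hi; simp [hzdef, hi])
  have hyz : graphOf n y ≤ graphOf n z := hle y (by intro i hi; simp [hzdef, hi])
  -- edge counts
  have cx := hx.card_edgeFinset
  have cy := hy.card_edgeFinset
  have cz := hzt.card_edgeFinset
  have hex : (graphOf n x).edgeFinset = (graphOf n z).edgeFinset :=
    Finset.eq_of_subset_of_card_le (SimpleGraph.edgeFinset_mono hxz) (by omega)
  have hey : (graphOf n y).edgeFinset = (graphOf n z).edgeFinset :=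
    Finset.eq_of_subset_of_card_le (SimpleGraph.edgeFinset_mono hyz) (by omega)
  exact hne (SimpleGraph.edgeFinset_inj.mp (hex.trans hey.symm))
end

section
/- For n divisible by 4, the majority function MAJ_n can be computed by a decision tree of depth at most 3n/4 where every query is a threshold-2 function T_2 applied to some multiset of input variables. -/
/-!
Keep the variables in groups each of which contains at most one `1` (initially the singletons)
and ask whether the groups contain at least `k` ones. Querying `T2` on the union of two groups
either certifies two ones, so both groups are discarded and `k` drops by two, or shows that the
union again contains at most one `1`, so the two groups merge. Every query removes a group and
every positive answer removes a second one, so along any path the number of queries is at most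
`#groups - k / 2`, which is `n - n / 4` for the `n` singletons and `k = n / 2`. The search stops
with a negative answer as soon as fewer than `k` groups remain.
-/

section

variable {ι : Type}

def weight (x : ι → Bool) : Multiset ι →+ ℕ :=
  Multiset.sumAddMonoidHom.comp (Multiset.mapAddMonoidHom fun i => (x i).toNat)

theorem T2_apply (M : Multiset ι) (x : ι → Bool) : T2 M x = decide (2 ≤ weight x M) := rfl

theorem weight_singleton (x : ι → Bool) (i : ι) : weight x {i} = (x i).toNat := by
  simp [weight]

def t2ThresholdTree : ℕ → List (Multiset ι) → DTree ι
  | 0, _ => .leaf true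
  -- doubling every position turns `T2` into an OR
  | 1, L => if L = [] then .leaf false else .node (T2 (2 • L.sum)) (.leaf true) (.leaf false)
  | k + 2, g₁ :: g₂ :: L =>
      if L.length < k then .leaf false
      else .node (T2 (g₁ + g₂)) (t2ThresholdTree k L) (t2ThresholdTree (k + 2) ((g₁ + g₂) :: L))
  | _ + 2, _ => .leaf false
termination_by _ L => L.length

theorem sum_weight_le_length {x : ι → Bool} {L : List (Multiset ι)}
    (hL : ∀ g ∈ L, weight x g ≤ 1) : (L.map (weight x)).sum ≤ L.length := by
  simpa using List.sum_le_card_nsmul (L.map (weight x)) 1 (by simpa using hL)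

theorem eval_t2ThresholdTree (x : ι → Bool) (k : ℕ) (L : List (Multiset ι))
    (hL : ∀ g ∈ L, weight x g ≤ 1) :
    (t2ThresholdTree k L).eval x = decide (k ≤ (L.map (weight x)).sum) := by
  induction k, L using t2ThresholdTree.induct with
  | case1 => simp [t2ThresholdTree, DTree.eval]
  | case2 => simp [t2ThresholdTree, DTree.eval]
  | case3 L hne =>
    have hdouble (t : ℕ) : 2 ≤ 2 * t ↔ 1 ≤ t := by omega
    simp [t2ThresholdTree, hne, DTree.eval, T2_apply, map_list_sum, hdouble]
  | case4 k g₁ g₂ L hshort =>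
    have := sum_weight_le_length hL
    simp only [t2ThresholdTree, if_pos hshort, DTree.eval, List.length_cons] at this ⊢
    simp only [Bool.false_eq, decide_eq_false_iff_not]
    omega
  | case5 k g₁ g₂ L hlong ih_both ih_merged =>
    have h₁ := hL g₁ (by simp)
    have h₂ := hL g₂ (by simp)
    have hrest : ∀ g ∈ L, weight x g ≤ 1 := fun g hg => hL g (by simp [hg])
    simp only [t2ThresholdTree, if_neg hlong, DTree.eval, T2_apply, map_add, List.map_cons,
      List.sum_cons]
    by_cases hboth : 2 ≤ weight x g₁ + weight x g₂
    · simp only [hboth, decide_true, if_true, ih_both hrest]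
      exact decide_eq_decide.mpr (by omega)
    · have hmerged : ∀ g ∈ (g₁ + g₂) :: L, weight x g ≤ 1 :=
        List.forall_mem_cons.mpr ⟨by rw [map_add]; omega, hrest⟩
      simp only [hboth, decide_false, Bool.false_eq_true, if_false, ih_merged hmerged,
        List.map_cons, List.sum_cons, map_add]
      exact decide_eq_decide.mpr (by omega)
  | case6 k L hshort =>
    have hlen : L.length ≤ 1 := by
      match L with
      | [] | [_] => simp
      | g₁ :: g₂ :: L => exact (hshort g₁ g₂ L rfl).elim
    have := sum_weight_le_length hL
    rw [t2ThresholdTree.eq_4 _ _ hshort]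
    simp only [DTree.eval, Bool.false_eq, decide_eq_false_iff_not]
    omega

theorem depth_t2ThresholdTree_le (k : ℕ) (L : List (Multiset ι)) :
    (t2ThresholdTree k L).depth ≤ L.length - k / 2 := by
  induction k, L using t2ThresholdTree.induct with
  | case1 | case2 => simp [t2ThresholdTree, DTree.depth]
  | case3 L hne =>
    simp only [t2ThresholdTree, if_neg hne, DTree.depth]
    have := List.length_pos_iff.mpr hne
    omega
  | case4 k g₁ g₂ L hshort => simp [t2ThresholdTree, hshort, DTree.depth]
  | case5 k g₁ g₂ L hlong ih_both ih_merged =>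
    simp only [t2ThresholdTree, if_neg hlong, DTree.depth, List.length_cons] at ih_merged ⊢
    omega
  | case6 k L hshort => simp [t2ThresholdTree.eq_4 _ _ hshort, DTree.depth]

theorem onlyQueries_t2ThresholdTree (k : ℕ) (L : List (Multiset ι)) :
    (t2ThresholdTree k L).OnlyQueries (t2Queries ι) := by
  induction k, L using t2ThresholdTree.induct with
  | case1 | case2 => simp [t2ThresholdTree, DTree.OnlyQueries]
  | case3 L hne => simp [t2ThresholdTree, hne, DTree.OnlyQueries, t2Queries]
  | case4 k g₁ g₂ L hshort => simp [t2ThresholdTree, hshort, DTree.OnlyQueries]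
  | case5 k g₁ g₂ L hlong ih_both ih_merged =>
    simp only [t2ThresholdTree, if_neg hlong, DTree.OnlyQueries]
    exact ⟨⟨_, rfl⟩, ih_both, ih_merged⟩
  | case6 k L hshort => simp [t2ThresholdTree.eq_4 _ _ hshort, DTree.OnlyQueries]

end

/-- The majority function on `n` variables (4 ∣ n) is computed by a
T₂-decision tree of depth at most `3n/4`. -/
theorem stmt8 (n : ℕ) (hn : 4 ∣ n) :
    ∃ t : DTree (Fin n), t.OnlyQueries (t2Queries (Fin n)) ∧
      (∀ x, t.eval x = true ↔ n / 2 ≤ ones n x) ∧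
      t.depth ≤ 3 * n / 4 := by
  let singletons : List (Multiset (Fin n)) := (List.finRange n).map ({·})
  have hlength : singletons.length = n := by simp [singletons]
  refine ⟨t2ThresholdTree (n / 2) singletons, onlyQueries_t2ThresholdTree _ _, fun x => ?_, ?_⟩
  · have hsingle : ∀ g ∈ singletons, weight x g ≤ 1 := by
      simp [singletons, weight_singleton, Bool.toNat_le]
    have htotal : (singletons.map (weight x)).sum = ones n x := by
      simp [singletons, Function.comp_def, weight_singleton, ones, Fin.sum_univ_def]
    simp [eval_t2ThresholdTree x _ _ hsingle, htotal]
  · have := depth_t2ThresholdTree_le (n / 2) singletons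
    omega
end
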